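/- arXiv:2511.05607 — 2 statements merged into one kernel-verified Lean document; each statement's English description precedes it below -/
import Mathlib

section
/- For every n ≥ 3, the corona C_n ⊙ 3K_1 admits a signed product cordial labeling. -/
/-- Number of vertices with label `s` under labeling `α`. -/
def vCount {V : Type} [Fintype V] [DecidableEq V] (α : V → ℤ) (s : ℤ) : ℕ :=
  (Finset.univ.filter (fun v => α v = s)).card

/-- The induced edge label on an unordered pair. -/
def edgeLabel {V : Type} (α : V → ℤ) : Sym2 V → ℤ :=
  Sym2.lift ⟨fun u v => α u * α v, fun u v => mul_comm _ _⟩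

/-- Number of edges of `G` with induced label `s` under vertex labeling `α`. -/
def eCount {V : Type} [Fintype V] [DecidableEq V] (G : SimpleGraph V)
    [DecidableRel G.Adj] (α : V → ℤ) (s : ℤ) : ℕ :=
  (G.edgeFinset.filter (fun e => edgeLabel α e = s)).card

/-- `G` admits a signed product cordial labeling. -/
def IsSignedProductCordial {V : Type} [Fintype V] [DecidableEq V]
    (G : SimpleGraph V) [DecidableRel G.Adj] : Prop :=
  ∃ α : V → ℤ, (∀ v, α v = 1 ∨ α v = -1) ∧
    ((vCount α 1 : ℤ) - (vCount α (-1) : ℤ)).natAbs ≤ 1 ∧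
    ((eCount G α 1 : ℤ) - (eCount G α (-1) : ℤ)).natAbs ≤ 1

/-- The splitting graph of `G`: for each vertex `v` (the `inl` copy) a new vertex `v'`
(the `inr` copy) adjacent to exactly the neighbors of `v` in `G`. -/
def splt {V : Type} (G : SimpleGraph V) : SimpleGraph (V ⊕ V) where
  Adj x y := match x, y with
    | .inl u, .inl v => G.Adj u v
    | .inl u, .inr v => G.Adj u v
    | .inr u, .inl v => G.Adj u v
    | .inr _, .inr _ => False
  symm := by constructor; rintro (u|u) (v|v) h <;> first | exact G.adj_symm h | exact h.elim
  loopless := by constructor; rintro (u|u) h; exact G.irrefl h; exact h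

instance {V : Type} (G : SimpleGraph V) [DecidableRel G.Adj] :
    DecidableRel (splt G).Adj := fun x y =>
  match x, y with
  | .inl u, .inl v => inferInstanceAs (Decidable (G.Adj u v))
  | .inl u, .inr v => inferInstanceAs (Decidable (G.Adj u v))
  | .inr u, .inl v => inferInstanceAs (Decidable (G.Adj u v))
  | .inr _, .inr _ => inferInstanceAs (Decidable False)

/-- The corona `Cₙ ⊙ 3K₁`: vertex `(x, 0)` is the cycle vertex `uₓ`, and `(x, 1)`,
`(x, 2)`, `(x, 3)` are the three pendant vertices `vₓ`, `wₓ`, `tₓ` attached to `uₓ`. -/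
def corona (n : ℕ) : SimpleGraph (Fin n × Fin 4) where
  Adj p q :=
    (p.2 = 0 ∧ q.2 = 0 ∧ p.1 ≠ q.1 ∧
      (q.1.val = (p.1.val + 1) % n ∨ p.1.val = (q.1.val + 1) % n)) ∨
    (p.1 = q.1 ∧ ((p.2 = 0 ∧ q.2 ≠ 0) ∨ (q.2 = 0 ∧ p.2 ≠ 0)))
  symm := by
    constructor
    rintro p q (⟨h1, h2, h3, h4⟩ | ⟨h1, h2⟩)
    · exact Or.inl ⟨h2, h1, h3.symm, h4.symm⟩
    · exact Or.inr ⟨h1.symm, h2.symm⟩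
  loopless := by
    constructor
    rintro p (⟨_, _, h, _⟩ | ⟨_, ⟨_, h⟩ | ⟨_, h⟩⟩) <;> simp_all

instance (n : ℕ) : DecidableRel (corona n).Adj := fun p q =>
  inferInstanceAs (Decidable
    ((p.2 = 0 ∧ q.2 = 0 ∧ p.1 ≠ q.1 ∧
      (q.1.val = (p.1.val + 1) % n ∨ p.1.val = (q.1.val + 1) % n)) ∨
    (p.1 = q.1 ∧ ((p.2 = 0 ∧ q.2 ≠ 0) ∨ (q.2 = 0 ∧ p.2 ≠ 0)))))

/-! Label each cycle vertex `uₓ` and each pendant `vₓ` by `1`, and the pendants `wₓ`, `tₓ` by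
`-1`. Let every vertex own one edge: `uₓ` owns the cycle edge `uₓuₓ₊₁`, a pendant vertex its
pendant edge. For `n ≥ 3` this is a bijection from vertices onto edges, and since all cycle
vertices carry `1`, the edge owned by `p` gets the label of `p`. So edge labels are distributed
exactly like vertex labels, `2n` of each sign. -/

open Finset

section

variable {n : ℕ}

theorem val_finRotate (x : Fin n) : (finRotate n x : ℕ) = (x + 1) % n := by
  have := x.neZero
  rw [finRotate_apply, Fin.val_add, Fin.val_one', Nat.add_mod_mod]

theorem finRotate_ne_self (hn : 2 ≤ n) (x : Fin n) : finRotate n x ≠ x := by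
  rw [Ne, Fin.ext_iff, val_finRotate]
  rcases Nat.lt_or_ge (x + 1) n with h | h
  · rw [Nat.mod_eq_of_lt h]; omega
  · rw [show (x : ℕ) + 1 = n by omega, Nat.mod_self]; omega

theorem finRotate_finRotate_ne_self (hn : 3 ≤ n) (x : Fin n) :
    finRotate n (finRotate n x) ≠ x := by
  rw [Ne, Fin.ext_iff, val_finRotate, val_finRotate]
  rcases Nat.lt_or_ge (x + 1) n with h | h
  · rw [Nat.mod_eq_of_lt h]
    rcases Nat.lt_or_ge (x + 2) n with h' | h'
    · rw [Nat.mod_eq_of_lt h']; omega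
    · rw [show (x : ℕ) + 1 + 1 = n by omega, Nat.mod_self]; omega
  · rw [show (x : ℕ) + 1 = n by omega, Nat.mod_self, Nat.mod_eq_of_lt (by omega)]; omega

theorem eCount_eq_of_edgeFinset_eq_map {V W : Type} [Fintype V] [DecidableEq V] [Fintype W]
    {G : SimpleGraph V} [DecidableRel G.Adj] {f : W ↪ Sym2 V} (hf : G.edgeFinset = univ.map f)
    (α : V → ℤ) (s : ℤ) : eCount G α s = #{w | edgeLabel α (f w) = s} := by
  rw [eCount, hf, filter_map, card_map]
  rfl

theorem vCount_comp_snd {A B : Type} [Fintype A] [DecidableEq A] [Fintype B] [DecidableEq B]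
    (β : B → ℤ) (s : ℤ) :
    vCount (fun p : A × B => β p.2) s = Fintype.card A * #{b | β b = s} := by
  rw [vCount, ← univ_product_univ, filter_product_right (fun b => β b = s), card_product,
    card_univ]

theorem corona_adj_iff {x y : Fin n} {j k : Fin 4} :
    (corona n).Adj (x, j) (y, k) ↔
      (j = 0 ∧ k = 0 ∧ x ≠ y ∧ (y = finRotate n x ∨ x = finRotate n y)) ∨
      (x = y ∧ (j = 0 ∧ k ≠ 0 ∨ k = 0 ∧ j ≠ 0)) := by
  simp only [corona, Fin.ext_iff (a := y), Fin.ext_iff (a := x) (b := finRotate n y), val_finRotate]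

def coronaEdge (n : ℕ) (p : Fin n × Fin 4) : Sym2 (Fin n × Fin 4) :=
  if p.2 = 0 then s(p, (finRotate n p.1, 0)) else s((p.1, 0), p)

theorem coronaEdge_injective (hn : 3 ≤ n) : Function.Injective (coronaEdge n) := by
  rintro ⟨x, j⟩ ⟨y, k⟩ h
  simp only [coronaEdge] at h
  split_ifs at h with hj hk hk <;> simp only [Sym2.eq_iff, Prod.mk.injEq] at h
  · obtain ⟨⟨rfl, -⟩, -⟩ | ⟨⟨rfl, -⟩, hy, -⟩ := h
    · rw [hj, hk]
    · exact absurd hy (finRotate_finRotate_ne_self hn y)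
  · grind
  · grind
  · obtain ⟨⟨rfl, -⟩, -, rfl⟩ | ⟨⟨-, h0⟩, -⟩ := h
    · rfl
    · exact absurd h0.symm hk

theorem coronaEdge_mem_edgeSet (hn : 2 ≤ n) (p : Fin n × Fin 4) :
    coronaEdge n p ∈ (corona n).edgeSet := by
  obtain ⟨x, j⟩ := p
  unfold coronaEdge
  split_ifs with hj
  · exact corona_adj_iff.2 (.inl ⟨hj, rfl, (finRotate_ne_self hn x).symm, .inl rfl⟩)
  · exact corona_adj_iff.2 (.inr ⟨rfl, .inl ⟨rfl, hj⟩⟩)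

theorem corona_edgeSet (hn : 2 ≤ n) : (corona n).edgeSet = Set.range (coronaEdge n) := by
  refine Set.Subset.antisymm (fun e he => ?_) (Set.range_subset_iff.2 (coronaEdge_mem_edgeSet hn))
  induction e using Sym2.ind with
  | _ p q =>
    obtain ⟨x, j⟩ := p
    obtain ⟨y, k⟩ := q
    rcases corona_adj_iff.1 ((SimpleGraph.mem_edgeSet _).1 he) with
      ⟨rfl, rfl, -, rfl | rfl⟩ | ⟨rfl, ⟨rfl, hk⟩ | ⟨rfl, hj⟩⟩
    · exact ⟨(x, 0), by simp [coronaEdge]⟩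
    · exact ⟨(y, 0), by simp [coronaEdge, Sym2.eq_swap]⟩
    · exact ⟨(x, k), by simp [coronaEdge, hk]⟩
    · exact ⟨(x, j), by simp [coronaEdge, hj, Sym2.eq_swap]⟩

theorem corona_edgeFinset (hn : 3 ≤ n) :
    (corona n).edgeFinset = univ.map ⟨coronaEdge n, coronaEdge_injective hn⟩ := by
  rw [← coe_inj, SimpleGraph.coe_edgeFinset, corona_edgeSet (by omega), coe_map, coe_univ,
    Set.image_univ]
  rfl

def coronaLabel (n : ℕ) : Fin n × Fin 4 → ℤ := fun p => ![1, 1, -1, -1] p.2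

theorem edgeLabel_coronaEdge (p : Fin n × Fin 4) :
    edgeLabel (coronaLabel n) (coronaEdge n p) = coronaLabel n p := by
  unfold coronaEdge
  split_ifs with hp <;> simp [edgeLabel, coronaLabel, hp]

theorem eCount_corona_coronaLabel (hn : 3 ≤ n) (s : ℤ) :
    eCount (corona n) (coronaLabel n) s = vCount (coronaLabel n) s := by
  simp only [eCount_eq_of_edgeFinset_eq_map (corona_edgeFinset hn), Function.Embedding.coeFn_mk,
    edgeLabel_coronaEdge, vCount]

theorem vCount_coronaLabel {s : ℤ} (hs : s = 1 ∨ s = -1) :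
    vCount (coronaLabel n) s = n * 2 := by
  unfold coronaLabel
  rw [vCount_comp_snd, Fintype.card_fin]
  rcases hs with rfl | rfl <;> rfl

end

/-- For every `n ≥ 3`, the corona `Cₙ ⊙ 3K₁` admits a signed product
cordial labeling. -/
theorem corona_signedProductCordial (n : ℕ) (hn : 3 ≤ n) :
    IsSignedProductCordial (corona n) := by
  refine ⟨coronaLabel n, fun ⟨_, j⟩ => ?_, ?_, ?_⟩
  · fin_cases j <;> simp [coronaLabel]
  · simp [vCount_coronaLabel]
  · simp [eCount_corona_coronaLabel hn, vCount_coronaLabel]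
end

section
/- For every k ≥ 2, the graph obtained by joining two copies of the helm H_4 by a path P_k (identifying one endpoint of the path with the apex of each helm) admits a signed product cordial labeling. -/
/-- Adjacency within a copy of the helm `H₄` minus its apex: vertices `0,…,3` are the
rim 4-cycle and `4,…,7` the pendant vertices, with `a + 4` pendant to rim vertex `a`. -/
def helmRestAdj (a b : Fin 8) : Prop :=
  (a.val < 4 ∧ b.val < 4 ∧ ((a.val + 1) % 4 = b.val ∨ (b.val + 1) % 4 = a.val)) ∨
  (b.val = a.val + 4) ∨ (a.val = b.val + 4)

instance : DecidableRel helmRestAdj := fun a b =>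
  inferInstanceAs (Decidable ((a.val < 4 ∧ b.val < 4 ∧
    ((a.val + 1) % 4 = b.val ∨ (b.val + 1) % 4 = a.val)) ∨
    (b.val = a.val + 4) ∨ (a.val = b.val + 4)))

/-- The graph obtained by joining two copies of the helm `H₄` by a path `Pₖ`:
`inl i` are the path vertices `u₁,…,uₖ`, with `u₁ = inl 0` the apex of the first helm
and `uₖ = inl (k-1)` the apex of the second; `inr (inl a)` are the non-apex vertices of
the first helm and `inr (inr a)` those of the second (rim `0,…,3`, pendants `4,…,7`). -/
def helmPath (k : ℕ) : SimpleGraph (Fin k ⊕ (Fin 8 ⊕ Fin 8)) where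
  Adj x y := match x, y with
    | .inl i, .inl j => i.val + 1 = j.val ∨ j.val + 1 = i.val
    | .inl i, .inr (.inl a) => i.val = 0 ∧ a.val < 4
    | .inr (.inl a), .inl i => i.val = 0 ∧ a.val < 4
    | .inl i, .inr (.inr a) => i.val = k - 1 ∧ a.val < 4
    | .inr (.inr a), .inl i => i.val = k - 1 ∧ a.val < 4
    | .inr (.inl a), .inr (.inl b) => helmRestAdj a b
    | .inr (.inr a), .inr (.inr b) => helmRestAdj a b
    | _, _ => False
  symm := by
    have hs : ∀ a b, helmRestAdj a b → helmRestAdj b a := by decide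
    constructor
    rintro (i | a | a) (j | b | b) h
    · exact h.symm
    · exact h
    · exact h
    · exact h
    · exact hs a b h
    · exact h.elim
    · exact h
    · exact h.elim
    · exact hs a b h
  loopless := by
    have hi : ∀ a, ¬ helmRestAdj a a := by decide
    constructor
    rintro (i | a | a) h
    · omega
    · exact hi a h
    · exact hi a h

instance (k : ℕ) : DecidableRel (helmPath k).Adj := fun x y =>
  match x, y with
  | .inl i, .inl j => inferInstanceAs (Decidable (_ ∨ _))
  | .inl i, .inr (.inl a) => inferInstanceAs (Decidable (_ ∧ _))
  | .inr (.inl a), .inl i => inferInstanceAs (Decidable (_ ∧ _))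
  | .inl i, .inr (.inr a) => inferInstanceAs (Decidable (_ ∧ _))
  | .inr (.inr a), .inl i => inferInstanceAs (Decidable (_ ∧ _))
  | .inr (.inl a), .inr (.inl b) => inferInstanceAs (Decidable (helmRestAdj a b))
  | .inr (.inr a), .inr (.inr b) => inferInstanceAs (Decidable (helmRestAdj a b))
  | .inr (.inl _), .inr (.inr _) => inferInstanceAs (Decidable False)
  | .inr (.inr _), .inr (.inl _) => inferInstanceAs (Decidable False)

/-!
Label the path `u₁, …, uₖ` periodically by `-1, 1, 1, -1, …`: its partial sums stay in
`{-1, 0, 1}` and the products along consecutive vertices alternate `-1, 1, …`, so the path is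
balanced on vertices and on edges up to one. In each helm give the rim `1, 1, -1, -1` and the
pendants `1, -1, 1, -1`. Then the non-apex helm vertices, the rim edges and the pendant edges are
each balanced, and since the rim labels sum to `0` so are the four spokes, whatever the label of
the apex. Both conditions therefore reduce to those of the path.
-/

open Finset

lemma Finset.sum_eq_card_filter_sub_card_filter {ι : Type*} (s : Finset ι) (f : ι → ℤ)
    (hf : ∀ i ∈ s, f i = 1 ∨ f i = -1) :
    ∑ i ∈ s, f i = (#(s.filter (f · = 1)) : ℤ) - #(s.filter (f · = -1)) := by
  rw [Finset.natCast_card_filter, Finset.natCast_card_filter, ← sum_sub_distrib]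
  refine sum_congr rfl fun i hi => ?_
  rcases hf i hi with h | h <;> simp [h]

lemma SimpleGraph.two_mul_sum_edgeFinset {V : Type*} [Fintype V] [DecidableEq V]
    (G : SimpleGraph V) [DecidableRel G.Adj] (f : Sym2 V → ℤ) :
    2 * ∑ e ∈ G.edgeFinset, f e = ∑ x, ∑ y, if G.Adj x y then f s(x, y) else 0 := by
  have hdarts : ∑ d : G.Dart, f d.edge = 2 * ∑ e ∈ G.edgeFinset, f e := by
    rw [← sum_fiberwise_of_maps_to (g := SimpleGraph.Dart.edge) (t := G.edgeFinset)
      (fun d _ => G.mem_edgeFinset.2 d.edge_mem), mul_sum]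
    refine sum_congr rfl fun e he => ?_
    rw [sum_congr rfl fun d hd => congrArg f (mem_filter.1 hd).2, sum_const,
      G.dart_edge_fiber_card e (G.mem_edgeFinset.1 he), nsmul_eq_mul]
    norm_num
  rw [← hdarts, ← Fintype.sum_prod_type', ← sum_filter]
  exact sum_bij' (fun d _ => d.toProd) (fun p hp => ⟨p, (mem_filter.1 hp).2⟩)
    (by simp) (by simp) (by simp) (by simp) fun _ _ => rfl

section Labeling

variable {V : Type} [Fintype V] [DecidableEq V] {α : V → ℤ}

lemma vCount_sub_vCount (hα : ∀ v, α v = 1 ∨ α v = -1) :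
    (vCount α 1 : ℤ) - vCount α (-1) = ∑ v, α v :=
  (sum_eq_card_filter_sub_card_filter _ α fun v _ => hα v).symm

lemma two_mul_eCount_sub_eCount (G : SimpleGraph V) [DecidableRel G.Adj]
    (hα : ∀ v, α v = 1 ∨ α v = -1) :
    2 * ((eCount G α 1 : ℤ) - eCount G α (-1)) =
      ∑ x, ∑ y, if G.Adj x y then α x * α y else 0 := by
  have hlabel : ∀ e ∈ G.edgeFinset, edgeLabel α e = 1 ∨ edgeLabel α e = -1 := by
    rintro ⟨x, y⟩ -
    rcases hα x with hx | hx <;> rcases hα y with hy | hy <;> simp [edgeLabel, hx, hy]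
  rw [eCount, eCount, ← sum_eq_card_filter_sub_card_filter _ _ hlabel,
    G.two_mul_sum_edgeFinset]
  rfl

end Labeling

lemma sum_sum_ite_consecutive_mul (n : ℕ) (x : ℕ → ℤ) :
    ∑ i : Fin n, ∑ j : Fin n,
        (if i.val + 1 = j.val ∨ j.val + 1 = i.val then x i * x j else 0) =
      2 * ∑ i ∈ range (n - 1), x i * x (i + 1) := by
  have hforward : ∑ i : Fin n, ∑ j : Fin n, (if i.val + 1 = j.val then x i * x j else 0) =
      ∑ i ∈ range (n - 1), x i * x (i + 1) := by
    have hrow : ∀ i : ℕ, ∑ j : Fin n, (if i + 1 = j.val then x i * x j else 0) =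
        if i + 1 < n then x i * x (i + 1) else 0 := fun i => by
      simp only [Fin.sum_univ_eq_sum_range (fun j => if i + 1 = j then x i * x j else 0),
        sum_ite_eq, mem_range]
    have hrange : (range n).filter (· + 1 < n) = range (n - 1) := by
      ext i
      simp only [mem_filter, mem_range]
      omega
    rw [Fin.sum_univ_eq_sum_range (fun i => ∑ j : Fin n, if i + 1 = j.val then x i * x j else 0)]
    simp only [hrow, ← sum_filter, hrange]
  have hsplit : ∀ i j : Fin n,
      (if i.val + 1 = j.val ∨ j.val + 1 = i.val then x i * x j else 0) =
        (if i.val + 1 = j.val then x i * x j else 0) +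
          (if j.val + 1 = i.val then x j * x i else 0) := by
    intro i j
    split_ifs <;> first | omega | ring
  have hbackward : ∑ i : Fin n, ∑ j : Fin n, (if j.val + 1 = i.val then x j * x i else 0) =
      ∑ i : Fin n, ∑ j : Fin n, (if i.val + 1 = j.val then x i * x j else 0) :=
    sum_comm
  simp only [hsplit, sum_add_distrib, hbackward, hforward]
  ring

section Rim

variable {ι : Type*} [Fintype ι] (P : ι → Prop) [DecidablePred P] (c : ι → ℤ)
  {δ : Fin 8 → ℤ}

lemma sum_sum_ite_rim_mul_eq_zero (hδ : ∑ a : Fin 8, (if a.val < 4 then δ a else 0) = 0) :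
    ∑ i, ∑ a : Fin 8, (if P i ∧ a.val < 4 then c i * δ a else 0) = 0 := by
  simp only [← ite_zero_mul_ite_zero, ← mul_sum, hδ, mul_zero, sum_const_zero]

lemma sum_sum_ite_rim_mul_eq_zero' (hδ : ∑ a : Fin 8, (if a.val < 4 then δ a else 0) = 0) :
    ∑ a : Fin 8, ∑ i, (if P i ∧ a.val < 4 then δ a * c i else 0) = 0 := by
  rw [sum_comm]
  simp only [mul_comm (δ _)]
  exact sum_sum_ite_rim_mul_eq_zero P c hδ

end Rim

section HelmPathAdj

variable {k : ℕ}

lemma helmPath_adj_inl_inl {i j : Fin k} :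
    (helmPath k).Adj (.inl i) (.inl j) ↔ i.val + 1 = j.val ∨ j.val + 1 = i.val := Iff.rfl

lemma helmPath_adj_inl_inr_inl {i : Fin k} {a : Fin 8} :
    (helmPath k).Adj (.inl i) (.inr (.inl a)) ↔ i.val = 0 ∧ a.val < 4 := Iff.rfl

lemma helmPath_adj_inr_inl_inl {i : Fin k} {a : Fin 8} :
    (helmPath k).Adj (.inr (.inl a)) (.inl i) ↔ i.val = 0 ∧ a.val < 4 := Iff.rfl

lemma helmPath_adj_inl_inr_inr {i : Fin k} {a : Fin 8} :
    (helmPath k).Adj (.inl i) (.inr (.inr a)) ↔ i.val = k - 1 ∧ a.val < 4 := Iff.rfl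

lemma helmPath_adj_inr_inr_inl {i : Fin k} {a : Fin 8} :
    (helmPath k).Adj (.inr (.inr a)) (.inl i) ↔ i.val = k - 1 ∧ a.val < 4 := Iff.rfl

lemma helmPath_adj_inr_inl_inr_inl {a b : Fin 8} :
    (helmPath k).Adj (.inr (.inl a)) (.inr (.inl b)) ↔ helmRestAdj a b := Iff.rfl

lemma helmPath_adj_inr_inr_inr_inr {a b : Fin 8} :
    (helmPath k).Adj (.inr (.inr a)) (.inr (.inr b)) ↔ helmRestAdj a b := Iff.rfl

lemma helmPath_not_adj_inr_inl_inr_inr {a b : Fin 8} :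
    ¬(helmPath k).Adj (.inr (.inl a)) (.inr (.inr b)) := id

lemma helmPath_not_adj_inr_inr_inr_inl {a b : Fin 8} :
    ¬(helmPath k).Adj (.inr (.inr a)) (.inr (.inl b)) := id

end HelmPathAdj

def helmPathLabel (k : ℕ) (x : ℕ → ℤ) (β γ : Fin 8 → ℤ) : Fin k ⊕ (Fin 8 ⊕ Fin 8) → ℤ :=
  Sum.elim (fun i => x i) (Sum.elim β γ)

lemma helmPathLabel_eq_one_or_neg_one {k : ℕ} {x : ℕ → ℤ} {β γ : Fin 8 → ℤ}
    (hx : ∀ i, x i = 1 ∨ x i = -1) (hβ : ∀ a, β a = 1 ∨ β a = -1)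
    (hγ : ∀ a, γ a = 1 ∨ γ a = -1) :
    ∀ v, helmPathLabel k x β γ v = 1 ∨ helmPathLabel k x β γ v = -1
  | .inl i => hx i
  | .inr (.inl a) => hβ a
  | .inr (.inr a) => hγ a

lemma sum_helmPathLabel (k : ℕ) (x : ℕ → ℤ) (β γ : Fin 8 → ℤ) :
    ∑ v, helmPathLabel k x β γ v = ∑ i ∈ range k, x i + ∑ a, β a + ∑ a, γ a := by
  simp only [Fintype.sum_sum_type, helmPathLabel, Sum.elim_inl, Sum.elim_inr,
    Fin.sum_univ_eq_sum_range x, add_assoc]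

lemma helmPath_sum_adj (k : ℕ) (x : ℕ → ℤ) (β γ : Fin 8 → ℤ)
    (hβ : ∑ a : Fin 8, (if a.val < 4 then β a else 0) = 0)
    (hγ : ∑ a : Fin 8, (if a.val < 4 then γ a else 0) = 0) :
    ∑ u, ∑ v, (if (helmPath k).Adj u v then
        helmPathLabel k x β γ u * helmPathLabel k x β γ v else 0) =
      2 * ∑ i ∈ range (k - 1), x i * x (i + 1) +
        ∑ a, ∑ b, (if helmRestAdj a b then β a * β b else 0) +
        ∑ a, ∑ b, (if helmRestAdj a b then γ a * γ b else 0) := by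
  simp only [Fintype.sum_sum_type, helmPathLabel, Sum.elim_inl, Sum.elim_inr, helmPath_adj_inl_inl,
    helmPath_adj_inl_inr_inl, helmPath_adj_inr_inl_inl, helmPath_adj_inl_inr_inr,
    helmPath_adj_inr_inr_inl, helmPath_adj_inr_inl_inr_inl, helmPath_adj_inr_inr_inr_inr,
    helmPath_not_adj_inr_inl_inr_inr, helmPath_not_adj_inr_inr_inr_inl, if_false,
    sum_const_zero, sum_add_distrib, sum_sum_ite_consecutive_mul,
    sum_sum_ite_rim_mul_eq_zero _ _ hβ, sum_sum_ite_rim_mul_eq_zero _ _ hγ,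
    sum_sum_ite_rim_mul_eq_zero' _ _ hβ, sum_sum_ite_rim_mul_eq_zero' _ _ hγ]
  ring

def pathLabel (i : ℕ) : ℤ := if i % 4 = 1 ∨ i % 4 = 2 then 1 else -1

lemma pathLabel_eq_one_or_neg_one (i : ℕ) : pathLabel i = 1 ∨ pathLabel i = -1 := by
  unfold pathLabel
  split_ifs <;> simp

lemma sum_range_pathLabel (n : ℕ) :
    ∑ i ∈ range n, pathLabel i = if n % 4 = 1 then -1 else if n % 4 = 3 then 1 else 0 := by
  induction n with
  | zero => rfl
  | succ n ih =>
    rw [sum_range_succ, ih, pathLabel]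
    split_ifs <;> omega

lemma sum_range_pathLabel_mul_succ (n : ℕ) :
    ∑ i ∈ range n, pathLabel i * pathLabel (i + 1) = if n % 2 = 1 then -1 else 0 := by
  induction n with
  | zero => rfl
  | succ n ih =>
    rw [sum_range_succ, ih, pathLabel, pathLabel]
    split_ifs <;> omega

def helmLabel : Fin 8 → ℤ := ![1, 1, -1, -1, 1, -1, 1, -1]

lemma helmLabel_eq_one_or_neg_one (a : Fin 8) : helmLabel a = 1 ∨ helmLabel a = -1 := by
  fin_cases a <;> decide

lemma sum_helmLabel : ∑ a, helmLabel a = 0 := by decide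

lemma helmLabel_rim : ∑ a : Fin 8, (if a.val < 4 then helmLabel a else 0) = 0 := by decide

lemma helmLabel_sum_adj :
    ∑ a, ∑ b, (if helmRestAdj a b then helmLabel a * helmLabel b else 0) = 0 := by decide

theorem helmPath_signedProductCordial_general (k : ℕ) :
    IsSignedProductCordial (helmPath k) := by
  have hα := helmPathLabel_eq_one_or_neg_one (k := k) pathLabel_eq_one_or_neg_one
    helmLabel_eq_one_or_neg_one helmLabel_eq_one_or_neg_one
  refine ⟨helmPathLabel k pathLabel helmLabel helmLabel, hα, ?_, ?_⟩
  · rw [vCount_sub_vCount hα, sum_helmPathLabel, sum_helmLabel, sum_range_pathLabel]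
    split_ifs <;> decide
  · have hedges := two_mul_eCount_sub_eCount (helmPath k) hα
    rw [helmPath_sum_adj k _ _ _ helmLabel_rim helmLabel_rim, helmLabel_sum_adj,
      sum_range_pathLabel_mul_succ] at hedges
    split_ifs at hedges <;> omega

/-- For every `k ≥ 2`, the graph obtained by joining two copies of the
helm `H₄` by a path `Pₖ` (identifying the endpoints of the path with the two apexes)
admits a signed product cordial labeling. -/
theorem helmPath_signedProductCordial (k : ℕ) (hk : 2 ≤ k) :
    IsSignedProductCordial (helmPath k) :=
  helmPath_signedProductCordial_general k
end
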